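/- arXiv:1006.5271 — 6 statements merged into one kernel-verified Lean document; each statement's English description precedes it below -/
import Mathlib

section
/- Let U be a finite set, A a finite set of functions A: U^n → Im(A), and p_A a probability distribution on A. Suppose there exist constants α, β ≥ 0 such that for every u ∈ U^n, the sum over all u' ≠ u with p_A({A : Au = Au'}) > α/|Im(A)| of p_A({A : Au = Au'}) is at most β. Then for all subsets T, T' ⊆ U^n: Σ_{u∈T, u'∈T'} p_A({A : Au = Au'}) ≤ |T ∩ T'| + |T||T'|α/|Im(A)| + min{|T|,|T'|}·β. -/
/-! Fix `u ∈ T`. The collision probabilities `p_A(Au = Au')` with `u' ∈ T' \ {u}` above the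
threshold `α / |Im(A)|` add up to at most `β` by the strong hash property, the remaining ones
contribute at most `|T'| α / |Im(A)|`, and `u' = u` contributes `1` exactly when `u ∈ T'`.
Summing over `u ∈ T` gives the bound with `|T| β`; since collision probability is symmetric
in `u, u'`, the roles of `T` and `T'` may be swapped, which gives `min {|T|, |T'|} β`. -/

open Finset
open scoped Classical

/-- Collision probability `p_A({A : Au = Au'})` for an ensemble of functions. -/
noncomputable def collP {𝒜 X B : Type*} [Fintype 𝒜] (p : 𝒜 → ℝ)
    (F : 𝒜 → X → B) (u u' : X) : ℝ :=
  ∑ a : 𝒜, if F a u = F a u' then p a else 0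

theorem Finset.sum_le_card_nsmul_add_sum_filter_lt {ι M : Type*} [AddCommMonoid M] [LinearOrder M]
    [IsOrderedAddMonoid M] {s t : Finset ι} {f : ι → M} {γ : M} (hγ : 0 ≤ γ)
    (hf : ∀ x ∈ t, 0 ≤ f x) (hst : s ⊆ t) :
    ∑ x ∈ s, f x ≤ #s • γ + ∑ x ∈ t with γ < f x, f x := by
  calc ∑ x ∈ s, f x ≤ ∑ x ∈ s, (γ + if γ < f x then f x else 0) := by
        refine sum_le_sum fun x _ => ?_
        split_ifs with h
        · exact le_add_of_nonneg_left hγ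
        · simpa using not_lt.mp h
    _ = #s • γ + ∑ x ∈ s with γ < f x, f x := by
        rw [sum_add_distrib, sum_const, sum_filter]
    _ ≤ #s • γ + ∑ x ∈ t with γ < f x, f x := by
        gcongr
        exact fun x hx _ => hf x (filter_subset _ _ hx)

section collP

variable {𝒜 X B : Type*} [Fintype 𝒜] {p : 𝒜 → ℝ} (F : 𝒜 → X → B)

lemma collP_comm (u u' : X) : collP p F u u' = collP p F u' u := by
  simp only [collP, eq_comm]

lemma collP_nonneg (hp : ∀ a, 0 ≤ p a) (u u' : X) : 0 ≤ collP p F u u' :=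
  sum_nonneg fun a _ => by split_ifs <;> simp [hp a]

lemma collP_self (hp1 : ∑ a, p a = 1) (u : X) : collP p F u u = 1 := by
  simp [collP, hp1]

variable [Fintype X] [DecidableEq X] {γ β : ℝ}

lemma sum_collP_le (hp : ∀ a, 0 ≤ p a) (hp1 : ∑ a, p a = 1) (hγ : 0 ≤ γ) {u : X}
    (hu : ∑ u' ∈ (univ.erase u).filter (fun u' => γ < collP p F u u'), collP p F u u' ≤ β)
    (T' : Finset X) :
    ∑ u' ∈ T', collP p F u u' ≤ (if u ∈ T' then 1 else 0) + #T' * γ + β := by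
  have hoff : ∑ u' ∈ T'.erase u, collP p F u u' ≤ #T' * γ + β :=
    calc ∑ u' ∈ T'.erase u, collP p F u u'
        ≤ #(T'.erase u) • γ + ∑ u' ∈ (univ.erase u).filter (fun u' => γ < collP p F u u'),
            collP p F u u' :=
          sum_le_card_nsmul_add_sum_filter_lt hγ (fun _ _ => collP_nonneg F hp _ _)
            (erase_subset_erase _ (subset_univ _))
      _ ≤ #T' * γ + β := by
          rw [nsmul_eq_mul]
          gcongr
          exact erase_subset _ _
  by_cases hu' : u ∈ T'
  · rw [← add_sum_erase _ _ hu', collP_self F hp1, if_pos hu']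
    linarith
  · rw [erase_eq_of_notMem hu'] at hoff
    rw [if_neg hu']
    linarith

lemma sum_sum_collP_le (hp : ∀ a, 0 ≤ p a) (hp1 : ∑ a, p a = 1) (hγ : 0 ≤ γ)
    (hhash : ∀ u : X,
      ∑ u' ∈ (univ.erase u).filter (fun u' => γ < collP p F u u'), collP p F u u' ≤ β)
    (T T' : Finset X) :
    ∑ u ∈ T, ∑ u' ∈ T', collP p F u u' ≤ #(T ∩ T') + #T * #T' * γ + #T * β :=
  calc ∑ u ∈ T, ∑ u' ∈ T', collP p F u u'
      ≤ ∑ u ∈ T, ((if u ∈ T' then 1 else 0) + #T' * γ + β) :=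
        sum_le_sum fun u _ => sum_collP_le F hp hp1 hγ (hhash u) T'
    _ = #(T ∩ T') + #T * #T' * γ + #T * β := by
        rw [sum_add_distrib, sum_add_distrib, sum_boole, filter_mem_eq_inter]
        simp only [sum_const, nsmul_eq_mul]
        ring

end collP

theorem stmt0_general {U B 𝒜 : Type*} [Fintype U] [Fintype B] [Fintype 𝒜] (n : ℕ)
    (p : 𝒜 → ℝ) (hp : ∀ a, 0 ≤ p a) (hp1 : ∑ a : 𝒜, p a = 1)
    (F : 𝒜 → (Fin n → U) → B) (α β : ℝ) (hα : 0 ≤ α)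
    (hhash : ∀ u : Fin n → U,
      ∑ u' ∈ (Finset.univ.erase u).filter
          (fun u' => α / (Fintype.card B : ℝ) < collP p F u u'),
        collP p F u u' ≤ β)
    (T T' : Finset (Fin n → U)) :
    ∑ u ∈ T, ∑ u' ∈ T', collP p F u u' ≤
      ((T ∩ T').card : ℝ) + (T.card : ℝ) * (T'.card : ℝ) * α / (Fintype.card B : ℝ)
        + (↑(min T.card T'.card) : ℝ) * β := by
  have hγ : 0 ≤ α / (Fintype.card B : ℝ) := by positivity
  have bound := sum_sum_collP_le F hp hp1 hγ hhash
  rw [mul_div_assoc]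
  rcases le_total #T #T' with h | h
  · rw [min_eq_left h]
    exact bound T T'
  · rw [min_eq_right h]
    calc ∑ u ∈ T, ∑ u' ∈ T', collP p F u u' = ∑ u ∈ T', ∑ u' ∈ T, collP p F u u' := by
          rw [sum_comm]
          exact sum_congr rfl fun _ _ => sum_congr rfl fun _ _ => collP_comm F _ _
      _ ≤ _ := bound T' T
      _ = _ := by rw [inter_comm]; ring

/-- Strong (α,β)-hash property implies the (α,β)-hash property. -/
theorem stmt0 {U B 𝒜 : Type*} [Fintype U] [Fintype B] [Fintype 𝒜] (n : ℕ)
    (p : 𝒜 → ℝ) (hp : ∀ a, 0 ≤ p a) (hp1 : ∑ a : 𝒜, p a = 1)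
    (F : 𝒜 → (Fin n → U) → B) (α β : ℝ) (hα : 0 ≤ α) (hβ : 0 ≤ β)
    (hhash : ∀ u : Fin n → U,
      ∑ u' ∈ (Finset.univ.erase u).filter
          (fun u' => α / (Fintype.card B : ℝ) < collP p F u u'),
        collP p F u u' ≤ β)
    (T T' : Finset (Fin n → U)) :
    ∑ u ∈ T, ∑ u' ∈ T', collP p F u u' ≤
      ((T ∩ T').card : ℝ) + (T.card : ℝ) * (T'.card : ℝ) * α / (Fintype.card B : ℝ)
        + (↑(min T.card T'.card) : ℝ) * β :=
  stmt0_general n p hp hp1 F α β hα hhash T T'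
end

section
/- Let (A, p_A) satisfy the bound Σ_{u∈T,u'∈T'} p_A({A : Au = Au'}) ≤ |T∩T'| + |T||T'|α/|Im A| + min{|T|,|T'|}β for all T,T' ⊆ U^n, and let a be drawn uniformly from Im(A), independent of A. Then for every nonempty T ⊆ U^n: P_{A,a}({(A,a) : T ∩ C_A(a) = ∅}) ≤ α − 1 + |Im A|·(β+1)/|T|. -/
/-!
Fix `A`, let `N = |Im A|`, `m = |T|`, let `I` be the number of values hit by `A` on `T` and
`Z = N - I` the number of missed ones. By Cauchy–Schwarz over the fibres, `m² ≤ I · S` where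
`S` counts the colliding pairs in `T × T`; since `I (2N - I) ≤ N²` this gives
`m² (Z + N) ≤ N² S`. Averaging over `A` and bounding `E S` by the hypothesis with `T' = T`
yields `E Z / N ≤ α - 1 + N (β + 1) / m`, and `E Z / N` is exactly the probability that the
uniform `a` is missed.
-/

open Finset
open scoped Classical

section Collisions

variable {X B : Type*} (f : X → B) (T : Finset X)

theorem sum_sq_card_fiber_eq_card_collisions :
    ∑ b ∈ T.image f, #{u ∈ T | f u = b} ^ 2 = #{x ∈ T ×ˢ T | f x.1 = f x.2} := by
  rw [card_eq_sum_card_fiberwise (f := fun x => f x.1) (t := T.image f)]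
  · refine sum_congr rfl fun b _ => ?_
    rw [sq, ← card_product, filter_filter]
    congr 1
    ext ⟨u, u'⟩
    simp only [mem_product, mem_filter]
    grind
  · intro x hx
    simp only [coe_filter, mem_product, Set.mem_ofPred_eq] at hx
    exact mem_image_of_mem f hx.1.1

theorem sq_card_le_card_image_mul_card_collisions :
    #T ^ 2 ≤ #(T.image f) * #{x ∈ T ×ˢ T | f x.1 = f x.2} := by
  rw [← sum_sq_card_fiber_eq_card_collisions, card_eq_sum_card_image f T]
  exact sq_sum_le_card_mul_sum_sq

theorem sq_card_mul_card_compl_image_add_card_le [Fintype B] :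
    (#T : ℝ) ^ 2 * (#(univ \ T.image f) + Fintype.card B) ≤
      (Fintype.card B : ℝ) ^ 2 * #{x ∈ T ×ˢ T | f x.1 = f x.2} := by
  have hCS : (#T : ℝ) ^ 2 ≤ #(T.image f) * #{x ∈ T ×ˢ T | f x.1 = f x.2} := by
    exact_mod_cast sq_card_le_card_image_mul_card_collisions f T
  have hmissed : (#(univ \ T.image f) : ℝ) = Fintype.card B - #(T.image f) := by
    rw [card_sdiff_of_subset (subset_univ _), card_univ, Nat.cast_sub (card_le_univ _)]
  rw [hmissed]
  have himage := (Nat.cast_le (α := ℝ)).mpr (card_le_univ (T.image f))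
  nlinarith [sq_nonneg ((Fintype.card B : ℝ) - #(T.image f)),
    (Nat.cast_nonneg (α := ℝ) #{x ∈ T ×ˢ T | f x.1 = f x.2})]

theorem sum_ite_forall_ne_eq_card_missed_mul [Fintype B]
    [DecidablePred fun b => ∀ u ∈ T, f u ≠ b] (c : ℝ) :
    ∑ b : B, (if ∀ u ∈ T, f u ≠ b then c else 0) = #(univ \ T.image f) * c := by
  rw [← sum_filter, sum_const, nsmul_eq_mul]
  congr 3
  ext b
  simp

end Collisions

theorem sum_sum_collP_eq {𝒜 X B : Type*} [Fintype 𝒜] (p : 𝒜 → ℝ) (F : 𝒜 → X → B)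
    (T T' : Finset X) :
    ∑ u ∈ T, ∑ u' ∈ T', collP p F u u' = ∑ a, p a * #{x ∈ T ×ˢ T' | F a x.1 = F a x.2} := by
  rw [← sum_product' (f := collP p F)]
  unfold collP
  rw [sum_comm]
  refine sum_congr rfl fun a _ => ?_
  rw [← sum_filter, sum_const, nsmul_eq_mul, mul_comm]

theorem stmt2_general {U B 𝒜 : Type*} [Fintype U] [Fintype B] [Nonempty B] [Fintype 𝒜] (n : ℕ)
    (p : 𝒜 → ℝ) (hp : ∀ a, 0 ≤ p a) (hp1 : ∑ a : 𝒜, p a = 1)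
    (F : 𝒜 → (Fin n → U) → B) (α β : ℝ)
    (hwhash : ∀ T T' : Finset (Fin n → U),
      ∑ u ∈ T, ∑ u' ∈ T', collP p F u u' ≤
        ((T ∩ T').card : ℝ) + (T.card : ℝ) * (T'.card : ℝ) * α / (Fintype.card B : ℝ)
          + (↑(min T.card T'.card) : ℝ) * β)
    (T : Finset (Fin n → U)) (hT : T.Nonempty) :
    ∑ a : 𝒜, ∑ b : B,
        (if ∀ u ∈ T, F a u ≠ b then p a * (1 / (Fintype.card B : ℝ)) else 0) ≤
      α - 1 + (Fintype.card B : ℝ) * (β + 1) / (T.card : ℝ) := by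
  have hN : (0 : ℝ) < Fintype.card B := by exact_mod_cast Fintype.card_pos
  have hm : (0 : ℝ) < #T := by exact_mod_cast hT.card_pos
  set N : ℝ := (Fintype.card B : ℝ)
  set m : ℝ := (#T : ℝ)
  set Z : 𝒜 → ℝ := fun a => (#(univ \ T.image (F a)) : ℝ)
  set S : 𝒜 → ℝ := fun a => (#{x ∈ T ×ˢ T | F a x.1 = F a x.2} : ℝ)
  have hmoment : ∑ a, p a * S a ≤ m + m * m * α / N + m * β := by
    simpa [sum_sum_collP_eq, inter_self] using hwhash T T
  have haverage : m ^ 2 * (∑ a, p a * Z a + N) ≤ N ^ 2 * ∑ a, p a * S a := by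
    calc m ^ 2 * (∑ a, p a * Z a + N) = ∑ a, p a * (m ^ 2 * (Z a + N)) := by
          simp only [mul_add, sum_add_distrib, mul_sum, ← sum_mul, hp1]
          ring_nf
      _ ≤ ∑ a, p a * (N ^ 2 * S a) :=
          sum_le_sum fun a _ => mul_le_mul_of_nonneg_left (sq_card_mul_card_compl_image_add_card_le _ _) (hp a)
      _ = N ^ 2 * ∑ a, p a * S a := by simp only [mul_sum, mul_left_comm]
  have hbound := haverage.trans (mul_le_mul_of_nonneg_left hmoment (sq_nonneg N))
  simp only [sum_ite_forall_ne_eq_card_missed_mul, ← mul_assoc, mul_comm _ (p _), ← sum_mul]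
  rw [mul_one_div, div_le_iff₀ hN, ← sub_nonneg]
  have hgap : (α - 1 + N * (β + 1) / m) * N - ∑ a, p a * Z a =
      (N ^ 2 * (m + m * m * α / N + m * β) - m ^ 2 * (∑ a, p a * Z a + N)) / m ^ 2 := by
    field_simp
    ring
  rw [hgap]
  exact div_nonneg (sub_nonneg.mpr hbound) (sq_nonneg m)

/-- Saturation property: with `a` uniform on `Im A` and independent of `A`,
`P({(A,a) : T ∩ C_A(a) = ∅}) ≤ α − 1 + |Im A|(β+1)/|T|`. -/
theorem stmt2 {U B 𝒜 : Type*} [Fintype U] [Fintype B] [Nonempty B] [Fintype 𝒜] (n : ℕ)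
    (p : 𝒜 → ℝ) (hp : ∀ a, 0 ≤ p a) (hp1 : ∑ a : 𝒜, p a = 1)
    (F : 𝒜 → (Fin n → U) → B) (α β : ℝ) (hα : 0 ≤ α) (hβ : 0 ≤ β)
    (hwhash : ∀ T T' : Finset (Fin n → U),
      ∑ u ∈ T, ∑ u' ∈ T', collP p F u u' ≤
        ((T ∩ T').card : ℝ) + (T.card : ℝ) * (T'.card : ℝ) * α / (Fintype.card B : ℝ)
          + (↑(min T.card T'.card) : ℝ) * β)
    (T : Finset (Fin n → U)) (hT : T.Nonempty) :
    ∑ a : 𝒜, ∑ b : B,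
        (if ∀ u ∈ T, F a u ≠ b then p a * (1 / (Fintype.card B : ℝ)) else 0) ≤
      α - 1 + (Fintype.card B : ℝ) * (β + 1) / (T.card : ℝ) :=
  stmt2_general n p hp hp1 F α β hwhash T hT
end

section
/- Suppose ensembles (A, p_A) and (A', p_{A'}) of functions U^n → Im A and U^n → Im A' respectively each satisfy the strong hash condition: for all u, Σ_{u'≠u : p({Au=Au'}) > α/|Im|} p({Au=Au'}) ≤ β (with respective constants (α_A, β_A) and (α_{A'}, β_{A'})). Define the product ensemble of functions Âu = (Au, A'u) with product distribution p_Â(A,A') = p_A(A)p_{A'}(A'). Then the product ensemble satisfies the strong hash condition with constants α_Â = α_A·α_{A'} and β_Â = β_A + β_{A'}. -/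
open Finset
open scoped Classical

/-- The strong (α,β)-hash condition for an ensemble of functions `X → B`. -/
noncomputable def StrongHash {𝒜 X B : Type*} [Fintype 𝒜] [Fintype X] [Fintype B]
    (p : 𝒜 → ℝ) (F : 𝒜 → X → B) (α β : ℝ) : Prop :=
  ∀ u : X,
    ∑ u' ∈ (Finset.univ.erase u).filter
        (fun u' => α / (Fintype.card B : ℝ) < collP p F u u'),
      collP p F u u' ≤ β

set_option maxHeartbeats 1600000 in
/-- Concatenation of two independent ensembles sharing the same domain has the strong
`(α_A·α_{A'}, β_A + β_{A'})`-hash property. -/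
theorem stmt3 {U BA BA' 𝒜 𝒜' : Type*} [Fintype U] [Fintype BA] [Fintype BA']
    [Fintype 𝒜] [Fintype 𝒜'] (n : ℕ)
    (p : 𝒜 → ℝ) (hp : ∀ a, 0 ≤ p a) (hp1 : ∑ a : 𝒜, p a = 1)
    (p' : 𝒜' → ℝ) (hp' : ∀ a, 0 ≤ p' a) (hp'1 : ∑ a : 𝒜', p' a = 1)
    (F : 𝒜 → (Fin n → U) → BA) (F' : 𝒜' → (Fin n → U) → BA')
    (αA βA αA' βA' : ℝ) (hαA : 0 ≤ αA) (hβA : 0 ≤ βA) (hαA' : 0 ≤ αA') (hβA' : 0 ≤ βA')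
    (hA : StrongHash p F αA βA) (hA' : StrongHash p' F' αA' βA') :
    StrongHash (fun x : 𝒜 × 𝒜' => p x.1 * p' x.2)
      (fun x (u : Fin n → U) => (F x.1 u, F' x.2 u)) (αA * αA') (βA + βA') := by
  intro u
  have hnn : ∀ u', 0 ≤ collP p F u u' := fun u' =>
    Finset.sum_nonneg fun a _ => by split; exacts [hp a, le_rfl]
  have hnn' : ∀ u', 0 ≤ collP p' F' u u' := fun u' =>
    Finset.sum_nonneg fun a _ => by split; exacts [hp' a, le_rfl]
  have hle1 : ∀ u', collP p F u u' ≤ 1 := fun u' => by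
    rw [← hp1]; exact Finset.sum_le_sum fun a _ => by split; exacts [le_rfl, hp a]
  have hle1' : ∀ u', collP p' F' u u' ≤ 1 := fun u' => by
    rw [← hp'1]; exact Finset.sum_le_sum fun a _ => by split; exacts [le_rfl, hp' a]
  have key : ∀ u', collP (fun x : 𝒜 × 𝒜' => p x.1 * p' x.2)
      (fun x (u : Fin n → U) => (F x.1 u, F' x.2 u)) u u'
      = collP p F u u' * collP p' F' u u' := by
    intro u'
    unfold collP
    rw [Finset.sum_mul_sum, Fintype.sum_prod_type]
    apply Finset.sum_congr rfl
    intro a _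
    apply Finset.sum_congr rfl
    intro a' _
    by_cases h1 : F a u = F a u' <;> by_cases h2 : F' a' u = F' a' u' <;>
      simp [Prod.ext_iff, h1, h2]
  refine le_trans (Finset.sum_le_sum_of_subset_of_nonneg
      (t := ((@Finset.erase _ (fun a b => Classical.propDecidable (a = b)) Finset.univ u).filter
          (fun u' => αA / (Fintype.card BA : ℝ) < collP p F u u'))
        ∪ ((@Finset.erase _ (fun a b => Classical.propDecidable (a = b)) Finset.univ u).filter
          (fun u' => αA' / (Fintype.card BA' : ℝ) < collP p' F' u u')))
      ?_ ?_) ?_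
  · -- subset
    intro u' hu'
    rw [Finset.mem_filter] at hu'
    obtain ⟨hmem, hlt⟩ := hu'
    rw [Finset.mem_union, Finset.mem_filter, Finset.mem_filter]
    by_contra hcon
    push_neg at hcon
    obtain ⟨h1, h2⟩ := hcon
    have h1 := h1 hmem
    have h2 := h2 hmem
    rw [key] at hlt
    have hmul : collP p F u u' * collP p' F' u u' ≤
        (αA / (Fintype.card BA : ℝ)) * (αA' / (Fintype.card BA' : ℝ)) :=
      mul_le_mul h1 h2 (hnn' u') (by positivity)
    rw [div_mul_div_comm] at hmul
    have hcard : (Fintype.card (BA × BA') : ℝ)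
        = (Fintype.card BA : ℝ) * (Fintype.card BA' : ℝ) := by
      rw [Fintype.card_prod]; push_cast; ring
    rw [hcard] at hlt
    linarith
  · -- nonneg
    intro u' _ _
    rw [key]
    exact mul_nonneg (hnn u') (hnn' u')
  · -- bound the union sum
    set SA := (@Finset.erase _ (fun a b => Classical.propDecidable (a = b)) Finset.univ u).filter
        (fun u' => αA / (Fintype.card BA : ℝ) < collP p F u u') with hSA
    set SA' := (@Finset.erase _ (fun a b => Classical.propDecidable (a = b)) Finset.univ u).filter
        (fun u' => αA' / (Fintype.card BA' : ℝ) < collP p' F' u u') with hSA'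
    calc ∑ u' ∈ SA ∪ SA', collP (fun x : 𝒜 × 𝒜' => p x.1 * p' x.2)
            (fun x (v : Fin n → U) => (F x.1 v, F' x.2 v)) u u'
        = ∑ u' ∈ SA ∪ SA', collP p F u u' * collP p' F' u u' :=
          Finset.sum_congr rfl fun u' _ => key u'
      _ ≤ (∑ u' ∈ SA, collP p F u u' * collP p' F' u u')
          + ∑ u' ∈ SA', collP p F u u' * collP p' F' u u' := by
          have h1 := Finset.sum_union_inter (s₁ := SA) (s₂ := SA')
            (f := fun u' => collP p F u u' * collP p' F' u u')
          have h2 : 0 ≤ ∑ u' ∈ SA ∩ SA', collP p F u u' * collP p' F' u u' :=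
            Finset.sum_nonneg fun u' _ => mul_nonneg (hnn u') (hnn' u')
          linarith
      _ ≤ (∑ u' ∈ SA, collP p F u u') + ∑ u' ∈ SA', collP p' F' u u' := by
          gcongr with u' _ u' _
          · calc collP p F u u' * collP p' F' u u' ≤ collP p F u u' * 1 :=
              mul_le_mul_of_nonneg_left (hle1' u') (hnn u')
            _ = collP p F u u' := mul_one _
          · calc collP p F u u' * collP p' F' u u' ≤ 1 * collP p' F' u u' :=
              mul_le_mul_of_nonneg_right (hle1 u') (hnn' u')
            _ = collP p' F' u u' := one_mul _
      _ ≤ βA + βA' := by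
          rw [hSA, hSA']
          exact add_le_add (hA u) (hA' u)
end

section
/- Let U be a finite field and (A, p_A) an ensemble of l×n matrices over U such that p_A({A : Au = 0}) depends on u only through the type (empirical distribution) of u. Fix a set Ĥ of types of length n (excluding the all-zero type), define α ≡ (|Im A|/|U|^l)·max_{t∈Ĥ} S(p_A,t)/S(u_A,t) and β ≡ Σ_{t∉Ĥ} S(p_A,t), where S(p,t) is the expected number of nonzero vectors u with Au = 0 and type t, and u_A is the uniform distribution on all l×n matrices. Then for every u ∈ U^n: Σ over u' ≠ u with p_A({A : Au = Au'}) > α/|Im A| of p_A({A : Au = Au'}) ≤ β; i.e., (A, p_A) satisfies the strong (α,β)-hash condition. -/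
open Finset
open scoped Classical

/-- The type (empirical count vector) of a sequence. -/
def typeOf {U : Type*} [DecidableEq U] {n : ℕ} (u : Fin n → U) : U → ℕ :=
  fun x => (Finset.univ.filter fun i => u i = x).card

/-- Average spectrum `S(p,t)`: expected number of vectors of type `t` in the kernel. -/
noncomputable def Sspec {U 𝒜 : Type*} [Field U] [Fintype U] [DecidableEq U]
    [Fintype 𝒜] {l n : ℕ} (p : 𝒜 → ℝ) (M : 𝒜 → Matrix (Fin l) (Fin n) U)
    (t : U → ℕ) : ℝ :=
  ∑ a : 𝒜, p a *
    ((Finset.univ.filter fun u : Fin n → U =>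
        (M a).mulVec u = 0 ∧ typeOf u = t).card : ℝ)

/-! Write `P w = p_A {A | A w = 0}`. The collision probability of `u` and `u'` is `P (u - u')`,
and `P` is constant on each type class `C_t`, so `S(p_A, t) = |C_t| P w` for any `w` of type `t`.
For the uniform ensemble, `A ↦ A w` is a surjective additive map for `w ≠ 0`, so `P w = |U|^(-l)`;
hence `S(p_A, t) / S(u_A, t) = |U|^l P w`, and the definition of `α` says exactly that
`P w ≤ α / |Im A|` whenever the type of `w` lies in `Ĥ`. Every `u'` in the sum therefore has
`t(u - u') ∈ H \ Ĥ`, and summing `P` over these differences is at most `β`. -/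

open Matrix

theorem card_filter_mulVec_eq_zero_mul_card_pow {K m n : Type*} [Field K] [Fintype K]
    [Fintype m] [DecidableEq m] [Fintype n] [DecidableEq n] {w : n → K} (hw : w ≠ 0) :
    #{A : Matrix m n K | A *ᵥ w = 0} * Fintype.card K ^ Fintype.card m =
      Fintype.card (Matrix m n K) := by
  let φ := mulVec.addMonoidHomLeft (m := m) w
  have hφ : Function.Surjective φ := by
    obtain ⟨j, hj⟩ := Function.ne_iff.mp hw
    intro b
    refine ⟨vecMulVec b (Pi.single j (w j)⁻¹), ?_⟩
    change vecMulVec b _ *ᵥ w = b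
    rw [vecMulVec_mulVec, single_dotProduct, inv_mul_cancel₀ hj, MulOpposite.op_one, one_smul]
  have hker : Nat.card φ.ker = #{A : Matrix m n K | A *ᵥ w = 0} := by
    rw [← Fintype.card_subtype, ← Nat.card_eq_fintype_card]
    rfl
  have := φ.ker.card_mul_index
  rwa [AddSubgroup.index_ker, AddMonoidHom.range_eq_top.mpr hφ, hker, AddSubgroup.card_top,
    Nat.card_eq_fintype_card, Fintype.card_fun, Nat.card_eq_fintype_card] at this

theorem Finset.sum_filter_erase_sub {G M : Type*} [AddCommGroup G] [Fintype G]
    [AddCommMonoid M] (u : G) (P : G → Prop) (f : G → M) :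
    ∑ x ∈ (univ.erase u).filter (fun x => P (u - x)), f (u - x) =
      ∑ w ∈ (univ.erase 0).filter P, f w := by
  refine sum_nbij' (u - ·) (u - ·) ?_ ?_ (fun _ _ => sub_sub_cancel u _)
    (fun _ _ => sub_sub_cancel u _) (fun _ _ => rfl) <;> intro x <;>
    simp only [mem_filter, mem_erase, mem_univ, and_true, sub_sub_cancel]
  · exact fun ⟨hxu, hP⟩ => ⟨sub_ne_zero.mpr hxu.symm, hP⟩
  · exact fun ⟨hx, hP⟩ => ⟨fun h => hx (sub_eq_self.mp h), hP⟩

section KernelProbability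

variable {𝒜 R m n : Type*} [Fintype 𝒜] [Fintype n]

noncomputable def kerProb [Semiring R] (p : 𝒜 → ℝ) (M : 𝒜 → Matrix m n R) (w : n → R) : ℝ :=
  ∑ a, if M a *ᵥ w = 0 then p a else 0

theorem kerProb_nonneg [Semiring R] {p : 𝒜 → ℝ} (hp : ∀ a, 0 ≤ p a) (M : 𝒜 → Matrix m n R)
    (w : n → R) : 0 ≤ kerProb p M w :=
  sum_nonneg fun a _ => by split_ifs <;> simp [hp a]

theorem collP_mulVec_eq_kerProb_sub [Ring R] (p : 𝒜 → ℝ) (M : 𝒜 → Matrix m n R)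
    (u u' : n → R) : collP p (fun a => (M a).mulVec) u u' = kerProb p M (u - u') := by
  simp only [collP, kerProb, mulVec_sub, sub_eq_zero]

theorem kerProb_uniform_of_ne_zero [Field R] [Fintype R] [Fintype m] [DecidableEq m] [DecidableEq n]
    {w : n → R} (hw : w ≠ 0) :
    kerProb (fun _ : Matrix m n R => 1 / (Fintype.card (Matrix m n R) : ℝ)) id w =
      1 / (Fintype.card R : ℝ) ^ Fintype.card m := by
  have hcard : (#{A : Matrix m n R | A *ᵥ w = 0} : ℝ) * (Fintype.card R : ℝ) ^ Fintype.card m =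
      Fintype.card (Matrix m n R) := by
    exact_mod_cast card_filter_mulVec_eq_zero_mul_card_pow (m := m) hw
  have hker : (0 : ℝ) < #{A : Matrix m n R | A *ᵥ w = 0} := by
    exact_mod_cast card_pos.mpr ⟨0, by simp⟩
  simp only [kerProb, id_eq]
  rw [← sum_filter, sum_const, nsmul_eq_mul, ← hcard]
  field_simp

end KernelProbability

section Types

variable {U : Type*} [DecidableEq U] {n : ℕ}

theorem eq_zero_of_typeOf_eq_typeOf_zero [Zero U] {w : Fin n → U}
    (h : typeOf w = typeOf (0 : Fin n → U)) : w = 0 := by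
  have hzeros := congrFun h 0
  simp only [typeOf, Pi.zero_apply] at hzeros
  rw [filter_true, card_filter_eq_iff] at hzeros
  exact funext fun i => hzeros i (mem_univ i)

theorem ne_zero_of_typeOf_eq [Zero U] {w w' : Fin n → U} (h : typeOf w' = typeOf w)
    (hw : w ≠ 0) : w' ≠ 0 := by
  rintro rfl
  exact hw (eq_zero_of_typeOf_eq_typeOf_zero h.symm)

variable [Field U] [Fintype U] {𝒜 : Type*} [Fintype 𝒜] {l : ℕ}

theorem Sspec_eq_sum_kerProb (p : 𝒜 → ℝ) (M : 𝒜 → Matrix (Fin l) (Fin n) U) (t : U → ℕ) :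
    Sspec p M t = ∑ w with typeOf w = t, kerProb p M w := by
  simp only [Sspec, kerProb]
  rw [sum_comm]
  refine sum_congr rfl fun a _ => ?_
  rw [sum_filter, card_filter, Nat.cast_sum, mul_sum]
  refine sum_congr rfl fun w _ => ?_
  split_ifs <;> simp_all

theorem sum_Sspec_eq_sum_kerProb (p : 𝒜 → ℝ) (M : 𝒜 → Matrix (Fin l) (Fin n) U)
    (T : Finset (U → ℕ)) :
    ∑ t ∈ T, Sspec p M t = ∑ w with typeOf w ∈ T, kerProb p M w := by
  rw [← sum_fiberwise_of_maps_to (g := typeOf) (fun w hw => (mem_filter.mp hw).2)]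
  refine sum_congr rfl fun t ht => ?_
  rw [Sspec_eq_sum_kerProb, filter_filter]
  refine sum_congr (filter_congr fun w _ => ?_) fun _ _ => rfl
  exact ⟨fun h => ⟨h ▸ ht, h⟩, And.right⟩

theorem Sspec_eq_card_mul_of_kerProb_eq {p : 𝒜 → ℝ} {M : 𝒜 → Matrix (Fin l) (Fin n) U}
    {t : U → ℕ} {c : ℝ}
    (hc : ∀ w : Fin n → U, typeOf w = t → kerProb p M w = c) :
    Sspec p M t = #{w : Fin n → U | typeOf w = t} * c := by
  rw [Sspec_eq_sum_kerProb, sum_congr rfl fun w hw => hc w (mem_filter.mp hw).2,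
    sum_const, nsmul_eq_mul]

theorem Sspec_div_Sspec_uniform {p : 𝒜 → ℝ} {M : 𝒜 → Matrix (Fin l) (Fin n) U}
    (hM : ∀ u u' : Fin n → U, typeOf u = typeOf u' → kerProb p M u = kerProb p M u')
    {w : Fin n → U} (hw : w ≠ 0) :
    Sspec p M (typeOf w) /
        Sspec (fun _ : Matrix (Fin l) (Fin n) U =>
          1 / (Fintype.card (Matrix (Fin l) (Fin n) U) : ℝ)) id (typeOf w) =
      kerProb p M w * (Fintype.card U : ℝ) ^ l := by
  have hclass : (0 : ℝ) < #{w' : Fin n → U | typeOf w' = typeOf w} := by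
    exact_mod_cast card_pos.mpr ⟨w, by simp⟩
  rw [Sspec_eq_card_mul_of_kerProb_eq fun w' hw' => hM w' w hw',
    Sspec_eq_card_mul_of_kerProb_eq fun w' hw' =>
      kerProb_uniform_of_ne_zero (m := Fin l) (ne_zero_of_typeOf_eq hw' hw),
    Fintype.card_fin]
  field_simp

theorem sum_collP_filter_lt_le_sum_Sspec {p : 𝒜 → ℝ} (hp : ∀ a, 0 ≤ p a)
    (M : 𝒜 → Matrix (Fin l) (Fin n) U) {c : ℝ} {Hhat : Finset (U → ℕ)}
    (hc : ∀ w : Fin n → U, typeOf w ∈ Hhat → kerProb p M w ≤ c) (u : Fin n → U) :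
    ∑ u' ∈ (univ.erase u).filter (fun u' => c < collP p (fun a => (M a).mulVec) u u'),
        collP p (fun a => (M a).mulVec) u u' ≤
      ∑ t ∈ (univ.erase (0 : Fin n → U)).image typeOf \ Hhat, Sspec p M t := by
  calc _ = ∑ w ∈ (univ.erase 0).filter (fun w => c < kerProb p M w), kerProb p M w := by
        simp_rw [collP_mulVec_eq_kerProb_sub]
        -- the two filters differ only in their decidability instances
        convert sum_filter_erase_sub u (fun w => c < kerProb p M w) (kerProb p M)
    _ ≤ ∑ w with typeOf w ∈ (univ.erase 0).image typeOf \ Hhat, kerProb p M w := by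
        refine sum_le_sum_of_subset_of_nonneg (fun w hw => ?_) fun w _ _ => kerProb_nonneg hp M w
        obtain ⟨hw0, hlarge⟩ := mem_filter.mp hw
        refine mem_filter.mpr ⟨mem_univ w, mem_sdiff.mpr ⟨mem_image_of_mem _ hw0, ?_⟩⟩
        exact fun hhat => (hc w hhat).not_gt hlarge
    _ = _ := (sum_Sspec_eq_sum_kerProb p M _).symm

end Types

/-- An ensemble of matrices whose kernel probability depends on a vector only through its
type satisfies the strong (α,β)-hash condition, with α, β defined from the average
spectrum relative to the uniform matrix ensemble. -/
theorem stmt6 {U 𝒜 : Type*} [Field U] [Fintype U] [DecidableEq U] [Fintype 𝒜]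
    (l n : ℕ)
    (p : 𝒜 → ℝ) (hp : ∀ a, 0 ≤ p a) (hp1 : ∑ a : 𝒜, p a = 1)
    (M : 𝒜 → Matrix (Fin l) (Fin n) U)
    (htype : ∀ u u' : Fin n → U, typeOf u = typeOf u' →
      (∑ a : 𝒜, if (M a).mulVec u = 0 then p a else 0) =
        (∑ a : 𝒜, if (M a).mulVec u' = 0 then p a else 0))
    -- Im 𝒜 : the union of the images of the matrices in the ensemble
    (ImA : Finset (Fin l → U))
    (hImA : ImA = Finset.univ.filter
      (fun b : Fin l → U => ∃ a : 𝒜, ∃ u : Fin n → U, (M a).mulVec u = b))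
    -- H : the set of all types of length n except the type of the zero vector
    (H : Finset (U → ℕ))
    (hH : H = ((Finset.univ : Finset (Fin n → U)).erase 0).image typeOf)
    (Hhat : Finset (U → ℕ)) (hHhatsub : Hhat ⊆ H) (hHhatne : Hhat.Nonempty)
    (α β : ℝ)
    (hα : α = ((ImA.card : ℝ) / (Fintype.card U : ℝ) ^ l) *
      Hhat.sup' hHhatne (fun t => Sspec p M t /
        Sspec (fun _ : Matrix (Fin l) (Fin n) U =>
          1 / (Fintype.card (Matrix (Fin l) (Fin n) U) : ℝ)) id t))
    (hβ : β = ∑ t ∈ H \ Hhat, Sspec p M t) :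
    ∀ u : Fin n → U,
      ∑ u' ∈ (Finset.univ.erase u).filter
          (fun u' => α / (ImA.card : ℝ) < collP p (fun a => (M a).mulVec) u u'),
        collP p (fun a => (M a).mulVec) u u' ≤ β := by
  intro u
  -- `htype` is `kerProb` up to the decidability instance of the `if`
  have hM : ∀ u u' : Fin n → U, typeOf u = typeOf u' → kerProb p M u = kerProb p M u' :=
    fun u u' h => by unfold kerProb; convert htype u u' h
  have hImA_pos : (0 : ℝ) < #ImA := by
    obtain ⟨a⟩ : Nonempty 𝒜 := by
      by_contra h𝒜
      simp [not_nonempty_iff.mp h𝒜] at hp1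
    exact_mod_cast card_pos.mpr ⟨0, by simpa [hImA] using ⟨a, 0, mulVec_zero _⟩⟩
  have hql : (0 : ℝ) < (Fintype.card U : ℝ) ^ l := pow_pos (by exact_mod_cast Fintype.card_pos) l
  have hαq : α / #ImA * (Fintype.card U : ℝ) ^ l = Hhat.sup' hHhatne (fun t => Sspec p M t /
      Sspec (fun _ : Matrix (Fin l) (Fin n) U =>
        1 / (Fintype.card (Matrix (Fin l) (Fin n) U) : ℝ)) id t) := by
    rw [hα]
    field_simp
  have hsmall : ∀ w : Fin n → U, typeOf w ∈ Hhat → kerProb p M w ≤ α / #ImA := by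
    intro w hw
    have hw0 : w ≠ 0 := by
      obtain ⟨w', hw', hw't⟩ := mem_image.mp (hH ▸ hHhatsub hw)
      exact ne_zero_of_typeOf_eq hw't.symm (ne_of_mem_erase hw')
    rw [← mul_le_mul_iff_of_pos_right hql, ← Sspec_div_Sspec_uniform hM hw0, hαq]
    exact le_sup' (fun t => Sspec p M t / Sspec _ id t) hw
  rw [hβ, hH]
  exact sum_collP_filter_lt_le_sum_Sspec hp M hsmall u
end

section
/- Let K = {1,...,k} with k ≥ 1, and for b^k ∈ {0,1}^k define S(b^k) ⊆ {0,1}^{k+1} as {(1,b^k)} ∪ {(0, b'^k) : b'^k ∈ {0,1}^k, b'^k ≠ b^k}. Then the convex hull of S(b^k) in R^{k+1} equals the polytope P(b^k) defined by: v_0 ≥ 0; v_j ≥ 0 for j with b_j = 0; v_j ≤ 1 for j with b_j = 1; v_0 + (−1)^{b_j} v_j ≤ 1 − b_j for all j ∈ K; and v_0 + Σ_{j∈K} (−1)^{b_j} v_j ≥ 1 − Σ_{j∈K} b_j. Moreover, every vertex of P(b^k) is integral. -/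
open Finset

/-- The polytope `P(b^k)` defined by the inequalities of the paper; points are
`v = (v_0, (v_1, ..., v_k))` and `(−1)^{b_j}` is written `1 − 2·b_j` for `b_j ∈ {0,1}`. -/
def Pbk {k : ℕ} (b : Fin k → ℝ) : Set (ℝ × (Fin k → ℝ)) :=
  {v | 0 ≤ v.1 ∧ (∀ j, b j = 0 → 0 ≤ v.2 j) ∧ (∀ j, b j = 1 → v.2 j ≤ 1) ∧
       (∀ j, v.1 + (1 - 2 * b j) * v.2 j ≤ 1 - b j) ∧
       1 - ∑ j, b j ≤ v.1 + ∑ j, (1 - 2 * b j) * v.2 j}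

/-- `S(b^k) = {(1,b^k)} ∪ {(0,u^k) : u^k ∈ {0,1}^k, u^k ≠ b^k}`. -/
def Sbk {k : ℕ} (b : Fin k → ℝ) : Set (ℝ × (Fin k → ℝ)) :=
  {w | w = (1, b) ∨
       ∃ u : Fin k → ℝ, (∀ j, u j = 0 ∨ u j = 1) ∧ u ≠ b ∧ w = (0, u)}

/-!
The affine reflection `u ↦ b + (1 - 2b) u` of the cube `[0,1]^k`, applied to the last `k`
coordinates, is an involution carrying `S(0)` onto `S(b)` and `P(0)` onto `P(b)`, so it suffices
to treat `b = 0`. There `P(0)` consists of the points `t • (1, 0) + (1 - t) • (0, w)` with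
`w ∈ [0,1]^k` and `∑ w ≥ 1`, and such a `w` is a convex combination of the nonzero vertices of
the cube. The integrality of the vertices follows since the extreme points of a convex hull
lie in the generating set.
-/

theorem mem_convexHull_nonzero_vertices {ι : Type*} [Fintype ι] {w : ι → ℝ}
    (h0 : ∀ j, 0 ≤ w j) (h1 : ∀ j, w j ≤ 1) (hsum : 1 ≤ ∑ j, w j) :
    w ∈ convexHull ℝ {u : ι → ℝ | (∀ j, u j = 0 ∨ u j = 1) ∧ u ≠ 0} := by
  classical
  set V := {u : ι → ℝ | (∀ j, u j = 0 ∨ u j = 1) ∧ u ≠ 0}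
  have hbasis : ∀ i : ι, (fun j => if i = j then (1 : ℝ) else 0) ∈ V := fun i =>
    ⟨fun j => by by_cases h : i = j <;> simp [h], fun h => by simpa using congrFun h i⟩
  have hV : V.Nonempty := by
    obtain ⟨i⟩ : Nonempty ι := by
      by_contra h
      rw [not_nonempty_iff] at h
      norm_num at hsum
    exact ⟨_, hbasis i⟩
  have hsimplex : stdSimplex ℝ ι ⊆ convexHull ℝ V := by
    rw [← convexHull_basis_eq_stdSimplex]
    exact convexHull_mono (Set.range_subset_iff.2 hbasis)
  have hcube : insert 0 V = Set.univ.pi fun _ => ({0, 1} : Set ℝ) := by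
    ext u
    by_cases hu : u = 0 <;> simp [V, hu]
  have hw : w ∈ convexHull ℝ (insert 0 V) := by
    rw [hcube, convexHull_pi]
    intro j _
    rw [convexHull_pair, segment_eq_Icc zero_le_one]
    exact ⟨h0 j, h1 j⟩
  -- `w` lies on a segment from `0` to some `y ∈ conv V`, beyond the point `w / ∑ w` where
  -- that segment crosses the simplex `conv {eᵢ} ⊆ conv V`.
  rw [convexHull_insert hV, convexJoin_singleton_left] at hw
  obtain ⟨y, hy, a, c, ha, hc, hac, hwy⟩ := Set.mem_iUnion₂.1 hw
  rw [smul_zero, zero_add] at hwy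
  have hσ : 0 < ∑ j, w j := by linarith
  have hnorm : (∑ j, w j)⁻¹ • w ∈ stdSimplex ℝ ι := by
    refine ⟨fun j => mul_nonneg (inv_nonneg.2 hσ.le) (h0 j), ?_⟩
    simp only [Pi.smul_apply, smul_eq_mul, ← Finset.mul_sum]
    exact inv_mul_cancel₀ hσ.ne'
  have hseg : w ∈ segment ℝ ((∑ j, w j)⁻¹ • w) y := by
    have hleft : w - (∑ j, w j)⁻¹ • w = ((1 - (∑ j, w j)⁻¹) * c) • y := by
      rw [← hwy]; module
    have hright : y - w = (1 - c) • y := by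
      rw [← hwy]; module
    rw [mem_segment_iff_sameRay, hleft, hright]
    refine (SameRay.sameRay_nonneg_smul_right y (by linarith)).nonneg_smul_left ?_
    exact mul_nonneg (sub_nonneg.2 (inv_le_one_of_one_le₀ hsum)) hc
  exact (convex_convexHull ℝ V).segment_subset (hsimplex hnorm) hy hseg

def cubeReflection {ι : Type*} (b : ι → ℝ) : (ι → ℝ) →ᵃ[ℝ] (ι → ℝ) where
  toFun u j := b j + (1 - 2 * b j) * u j
  linear := LinearMap.mulLeft ℝ fun j => 1 - 2 * b j
  map_vadd' u v := by ext j; simp; ring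

section

variable {ι : Type*} {b : ι → ℝ}

@[simp]
theorem cubeReflection_apply (u : ι → ℝ) (j : ι) :
    cubeReflection b u j = b j + (1 - 2 * b j) * u j := rfl

theorem cubeReflection_involutive (hb : ∀ j, b j = 0 ∨ b j = 1) :
    Function.Involutive (cubeReflection b) := by
  intro u
  funext j
  rcases hb j with h | h
  · simp [h]
  · simp [h]; ring

theorem cubeReflection_eq_zero_iff (hb : ∀ j, b j = 0 ∨ b j = 1) {u : ι → ℝ} :
    cubeReflection b u = 0 ↔ u = b := by
  rw [(cubeReflection_involutive hb).eq_iff]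
  congr!
  funext j
  simp

theorem cubeReflection_mem_vertices_iff (hb : ∀ j, b j = 0 ∨ b j = 1) {u : ι → ℝ} :
    (∀ j, cubeReflection b u j = 0 ∨ cubeReflection b u j = 1) ↔ ∀ j, u j = 0 ∨ u j = 1 := by
  refine forall_congr' fun j => ?_
  rcases hb j with h | h
  · simp [h]
  · simp only [cubeReflection_apply, h]
    constructor <;> rintro (h' | h') <;> [right; left; right; left] <;> linarith

end

section

variable {k : ℕ} {b : Fin k → ℝ}

theorem mem_Pbk_zero {v : ℝ × (Fin k → ℝ)} :
    v ∈ Pbk 0 ↔ 0 ≤ v.1 ∧ (∀ j, 0 ≤ v.2 j) ∧ (∀ j, v.1 + v.2 j ≤ 1) ∧ 1 ≤ v.1 + ∑ j, v.2 j := by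
  simp [Pbk]

theorem mem_Sbk {v : ℝ × (Fin k → ℝ)} :
    v ∈ Sbk b ↔ v.1 = 1 ∧ v.2 = b ∨ v.1 = 0 ∧ (∀ j, v.2 j = 0 ∨ v.2 j = 1) ∧ v.2 ≠ b := by
  obtain ⟨t, u⟩ := v
  simp only [Sbk, Set.mem_ofPred_eq, Prod.mk.injEq]
  constructor
  · rintro (h | ⟨u', hu', hne, rfl, rfl⟩)
    exacts [Or.inl h, Or.inr ⟨rfl, hu', hne⟩]
  · rintro (h | ⟨rfl, hu, hne⟩)
    exacts [Or.inl h, Or.inr ⟨u, hu, hne, rfl, rfl⟩]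

theorem convex_Pbk (b : Fin k → ℝ) : Convex ℝ (Pbk b) := by
  rintro x ⟨hx0, hx1, hx2, hx3, hx4⟩ y ⟨hy0, hy1, hy2, hy3, hy4⟩ a c ha hc hac
  simp only [Pbk, Set.mem_ofPred_eq, Prod.fst_add, Prod.snd_add, Prod.smul_fst, Prod.smul_snd,
    Pi.add_apply, Pi.smul_apply, smul_eq_mul]
  refine ⟨by positivity, fun j hj => ?_, fun j hj => ?_, fun j => ?_, ?_⟩
  · nlinarith [hx1 j hj, hy1 j hj]
  · nlinarith [hx2 j hj, hy2 j hj]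
  · linear_combination mul_le_mul_of_nonneg_left (hx3 j) ha +
      mul_le_mul_of_nonneg_left (hy3 j) hc + (1 - b j) * hac
  · have hsum : ∑ j, (1 - 2 * b j) * (a * x.2 j + c * y.2 j) =
        a * ∑ j, (1 - 2 * b j) * x.2 j + c * ∑ j, (1 - 2 * b j) * y.2 j := by
      simp only [Finset.mul_sum, ← Finset.sum_add_distrib]
      exact Finset.sum_congr rfl fun j _ => by ring
    rw [hsum]
    linear_combination mul_le_mul_of_nonneg_left hx4 ha + mul_le_mul_of_nonneg_left hy4 hc -
      (1 - ∑ j, b j) * hac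

theorem Sbk_zero_subset_Pbk_zero : Sbk (0 : Fin k → ℝ) ⊆ Pbk 0 := by
  intro v hv
  rw [mem_Pbk_zero]
  rcases mem_Sbk.1 hv with ⟨h1, h2⟩ | ⟨h1, hu, hne⟩
  · simp [h1, h2]
  · obtain ⟨j, hj⟩ := Function.ne_iff.1 hne
    have hnonneg : ∀ j, 0 ≤ v.2 j := fun j => by rcases hu j with h | h <;> simp [h]
    refine ⟨h1.ge, hnonneg, fun j => by rcases hu j with h | h <;> simp [h, h1], ?_⟩
    calc 1 = v.2 j := ((hu j).resolve_left hj).symm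
      _ ≤ ∑ j, v.2 j := Finset.single_le_sum (fun j _ => hnonneg j) (Finset.mem_univ j)
      _ = v.1 + ∑ j, v.2 j := by rw [h1, zero_add]

theorem Pbk_zero_subset_convexHull (hk : 1 ≤ k) :
    Pbk (0 : Fin k → ℝ) ⊆ convexHull ℝ (Sbk 0) := by
  rintro ⟨t, w⟩ hv
  simp only [mem_Pbk_zero] at hv
  obtain ⟨ht0, hw0, hw1, hsum⟩ := hv
  have h1S : ((1 : ℝ), (0 : Fin k → ℝ)) ∈ convexHull ℝ (Sbk 0) :=
    subset_convexHull ℝ _ (Or.inl rfl)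
  obtain rfl | ht1 := (show t ≤ 1 by linarith [hw0 ⟨0, hk⟩, hw1 ⟨0, hk⟩]).eq_or_lt
  · convert h1S
    funext j
    exact le_antisymm (by linarith [hw1 j] : w j ≤ 0) (hw0 j)
  have hd : 0 < 1 - t := by linarith
  have hw' :
      (1 - t)⁻¹ • w ∈ convexHull ℝ {u : Fin k → ℝ | (∀ j, u j = 0 ∨ u j = 1) ∧ u ≠ 0} := by
    refine mem_convexHull_nonzero_vertices (fun j => ?_) (fun j => ?_) ?_
    · exact mul_nonneg (inv_nonneg.2 hd.le) (hw0 j)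
    · rw [Pi.smul_apply, smul_eq_mul, inv_mul_le_iff₀ hd]; linarith [hw1 j]
    · simp only [Pi.smul_apply, smul_eq_mul, ← Finset.mul_sum]
      rw [le_inv_mul_iff₀ hd]
      linarith
  have h0S : ((0 : ℝ), (1 - t)⁻¹ • w) ∈ convexHull ℝ (Sbk 0) := by
    have := Set.mem_image_of_mem (LinearMap.inr ℝ ℝ (Fin k → ℝ)) hw'
    rw [LinearMap.image_convexHull] at this
    refine convexHull_mono ?_ this
    rintro _ ⟨u, ⟨hu, hne⟩, rfl⟩
    exact Or.inr ⟨u, hu, hne, rfl⟩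
  have hcomb :
      (t, w) = t • ((1 : ℝ), (0 : Fin k → ℝ)) + (1 - t) • ((0 : ℝ), (1 - t)⁻¹ • w) := by
    ext
    · simp
    · simp [smul_smul, mul_inv_cancel₀ hd.ne']
  rw [hcomb]
  exact convex_convexHull ℝ _ h1S h0S ht0 hd.le (by ring)

theorem convexHull_Sbk_zero (hk : 1 ≤ k) : convexHull ℝ (Sbk (0 : Fin k → ℝ)) = Pbk 0 :=
  (convexHull_min Sbk_zero_subset_Pbk_zero (convex_Pbk 0)).antisymm
    (Pbk_zero_subset_convexHull hk)

theorem mem_Pbk_iff_cubeReflection (hb : ∀ j, b j = 0 ∨ b j = 1) {v : ℝ × (Fin k → ℝ)} :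
    v ∈ Pbk b ↔ (v.1, cubeReflection b v.2) ∈ Pbk 0 := by
  obtain ⟨t, u⟩ := v
  set w := cubeReflection b u
  have hw : ∀ j, w j = b j + (1 - 2 * b j) * u j := fun j => rfl
  have hbox : ∀ j, ((b j = 0 → 0 ≤ u j) ∧ (b j = 1 → u j ≤ 1)) ↔ 0 ≤ w j := by
    intro j
    rcases hb j with h | h
    · simp [hw, h]
    · rw [hw, h]; norm_num
  have hsum : ∑ j, (1 - 2 * b j) * u j = ∑ j, w j - ∑ j, b j := by
    rw [← Finset.sum_sub_distrib]
    simp [hw]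
  rw [mem_Pbk_zero]
  simp only [Pbk, Set.mem_ofPred_eq, hsum]
  constructor
  · rintro ⟨h0, h1, h2, h3, h4⟩
    exact ⟨h0, fun j => (hbox j).1 ⟨h1 j, h2 j⟩, fun j => by linarith [h3 j, hw j], by linarith⟩
  · rintro ⟨h0, h1, h3, h4⟩
    exact ⟨h0, fun j => ((hbox j).2 (h1 j)).1, fun j => ((hbox j).2 (h1 j)).2,
      fun j => by linarith [h3 j, hw j], by linarith⟩

theorem mem_Sbk_iff_cubeReflection (hb : ∀ j, b j = 0 ∨ b j = 1) {v : ℝ × (Fin k → ℝ)} :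
    v ∈ Sbk b ↔ (v.1, cubeReflection b v.2) ∈ Sbk 0 := by
  simp only [mem_Sbk, ne_eq, cubeReflection_eq_zero_iff hb, cubeReflection_mem_vertices_iff hb]

end

theorem exists_intCast_eq_of_eq_zero_or_eq_one {x : ℝ} (h : x = 0 ∨ x = 1) : ∃ m : ℤ, x = m := by
  rcases h with rfl | rfl
  exacts [⟨0, by simp⟩, ⟨1, by simp⟩]

/-- The convex hull of `S(b^k)` equals the polytope `P(b^k)`, and every vertex
(extreme point) of `P(b^k)` is integral. -/
theorem stmt10 {k : ℕ} (hk : 1 ≤ k) (b : Fin k → ℝ) (hb : ∀ j, b j = 0 ∨ b j = 1) :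
    convexHull ℝ (Sbk b) = Pbk b ∧
    ∀ v ∈ Set.extremePoints ℝ (Pbk b),
      (∃ m : ℤ, v.1 = (m : ℝ)) ∧ ∀ j, ∃ m : ℤ, v.2 j = (m : ℝ) := by
  set F := (AffineMap.id ℝ ℝ).prodMap (cubeReflection b)
  have hF : Function.Involutive F := fun v => Prod.ext rfl (cubeReflection_involutive hb v.2)
  have hP : Pbk b = F '' Pbk 0 := by
    rw [hF.image_eq_preimage_symm]
    ext v
    exact mem_Pbk_iff_cubeReflection hb
  have hS : Sbk b = F '' Sbk 0 := by
    rw [hF.image_eq_preimage_symm]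
    ext v
    exact mem_Sbk_iff_cubeReflection hb
  have hull : convexHull ℝ (Sbk b) = Pbk b := by
    rw [hS, hP, ← AffineMap.image_convexHull, convexHull_Sbk_zero hk]
  refine ⟨hull, fun v hv => ?_⟩
  rw [← hull] at hv
  rcases mem_Sbk.1 (extremePoints_convexHull_subset hv) with ⟨h1, h2⟩ | ⟨h1, hu, -⟩
  · exact ⟨⟨1, by simp [h1]⟩, fun j => h2 ▸ exists_intCast_eq_of_eq_zero_or_eq_one (hb j)⟩
  · exact ⟨⟨0, by simp [h1]⟩, fun j => exists_intCast_eq_of_eq_zero_or_eq_one (hu j)⟩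
end

section
/- Let v = (v_0, v_1, ..., v_k) ∈ P(b^k) with 0 < v_0 < 1. Define u_j ≡ (v_j − v_0 b_j)/(1 − v_0) for j ∈ {1,...,k}. Then (0, u_1, ..., u_k) ∈ P(b^k), and v = v_0·(1, b^k) + (1 − v_0)·(0, u^k); consequently v is not a vertex of P(b^k). -/
open Finset

/-!
The point `(1, b^k)` makes every defining inequality of `P(b^k)` tight except `v_0 ≥ 0`.
Hence along the line through `(1, b^k)` and `(0, u^k)` the slack of each of those inequalities
at `t • (1, b^k) + (1 - t) • (0, u^k)` is `1 - t` times its slack at `(0, u^k)`, so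
`(0, u^k) ∈ P(b^k)` as soon as one such point with `t < 1` is. A point `v` with
`0 < v_0 < 1` is then an interior point of the segment from `(1, b^k)` to `(0, u^k)`.
-/

section

variable {k : ℕ} {b : Fin k → ℝ}

lemma sign_mul_self_of_zero_or_one {x : ℝ} (hx : x = 0 ∨ x = 1) : (1 - 2 * x) * x = -x := by
  rcases hx with rfl | rfl <;> norm_num

lemma sum_sign_mul_self (hb : ∀ j, b j = 0 ∨ b j = 1) :
    ∑ j, (1 - 2 * b j) * b j = -∑ j, b j := by
  rw [← sum_neg_distrib]
  exact sum_congr rfl fun j _ ↦ sign_mul_self_of_zero_or_one (hb j)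

lemma one_b_mem_Pbk (hb : ∀ j, b j = 0 ∨ b j = 1) : ((1 : ℝ), b) ∈ Pbk b := by
  refine ⟨zero_le_one, fun j hj ↦ hj.ge, fun j hj ↦ hj.le, fun j ↦ ?_, ?_⟩
  · rw [sign_mul_self_of_zero_or_one (hb j)]; linarith
  · rw [sum_sign_mul_self hb]; linarith

lemma eq_smul_one_b_add_smul_zero (v : ℝ × (Fin k → ℝ)) (h1 : v.1 ≠ 1) (u : Fin k → ℝ)
    (hu : ∀ j, u j = (v.2 j - v.1 * b j) / (1 - v.1)) :
    v = v.1 • ((1 : ℝ), b) + (1 - v.1) • ((0 : ℝ), u) := by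
  have h1' : 1 - v.1 ≠ 0 := sub_ne_zero.mpr h1.symm
  ext j
  · simp
  · simp [hu j, mul_div_cancel₀ _ h1']

lemma zero_mem_Pbk_of_smul_add_smul_mem (hb : ∀ j, b j = 0 ∨ b j = 1) {t : ℝ} (ht : t < 1)
    {u : Fin k → ℝ} (hmem : t • ((1 : ℝ), b) + (1 - t) • ((0 : ℝ), u) ∈ Pbk b) :
    ((0 : ℝ), u) ∈ Pbk b := by
  obtain ⟨-, hpos, hle, hrow, hsum⟩ := hmem
  simp only [Prod.fst_add, Prod.snd_add, Prod.smul_fst, Prod.smul_snd, Pi.add_apply,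
    Pi.smul_apply, smul_eq_mul, mul_one, mul_zero, add_zero] at hpos hle hrow hsum
  have hs : 0 < 1 - t := sub_pos.mpr ht
  refine ⟨le_rfl, fun j hj ↦ ?_, fun j hj ↦ ?_, fun j ↦ ?_, ?_⟩
  · have := hpos j hj
    rw [hj] at this
    nlinarith
  · have := hle j hj
    rw [hj] at this
    nlinarith
  · have := hrow j
    have hsign := sign_mul_self_of_zero_or_one (hb j)
    show 0 + (1 - 2 * b j) * u j ≤ 1 - b j
    nlinarith
  · have hexpand : ∑ j, (1 - 2 * b j) * (t * b j + (1 - t) * u j)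
        = t * ∑ j, (1 - 2 * b j) * b j + (1 - t) * ∑ j, (1 - 2 * b j) * u j := by
      rw [mul_sum, mul_sum, ← sum_add_distrib]
      exact sum_congr rfl fun j _ ↦ by ring
    rw [hexpand, sum_sign_mul_self hb] at hsum
    show 1 - ∑ j, b j ≤ 0 + ∑ j, (1 - 2 * b j) * u j
    nlinarith

end

/-- A point of `P(b^k)` with `0 < v_0 < 1` decomposes as a convex combination of
`(1,b^k)` and a point `(0,u^k)` of `P(b^k)`, hence is not a vertex (extreme point). -/
theorem stmt13 {k : ℕ} (b : Fin k → ℝ) (hb : ∀ j, b j = 0 ∨ b j = 1)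
    (v : ℝ × (Fin k → ℝ)) (hv : v ∈ Pbk b) (h0 : 0 < v.1) (h1 : v.1 < 1)
    (u : Fin k → ℝ) (hu : ∀ j, u j = (v.2 j - v.1 * b j) / (1 - v.1)) :
    ((0 : ℝ), u) ∈ Pbk b ∧
    v = v.1 • (((1 : ℝ), b) : ℝ × (Fin k → ℝ)) + (1 - v.1) • (((0 : ℝ), u) : ℝ × (Fin k → ℝ)) ∧
    v ∉ Set.extremePoints ℝ (Pbk b) := by
  have hdec := eq_smul_one_b_add_smul_zero v h1.ne u hu
  have hu_mem : ((0 : ℝ), u) ∈ Pbk b :=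
    zero_mem_Pbk_of_smul_add_smul_mem hb h1 (hdec ▸ hv)
  refine ⟨hu_mem, hdec, fun hext ↦ ?_⟩
  have hseg : v ∈ openSegment ℝ ((1 : ℝ), b) ((0 : ℝ), u) :=
    ⟨v.1, 1 - v.1, h0, sub_pos.mpr h1, add_sub_cancel _ _, hdec.symm⟩
  have hv_eq : ((1 : ℝ), b) = v := hext.2 (one_b_mem_Pbk hb) hu_mem hseg
  exact h1.ne' (congrArg Prod.fst hv_eq)
end
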